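/- arXiv:1206.5775 — 12 statements merged into one kernel-verified Lean document; each statement's English description precedes it below -/
import Mathlib

section
/- Let X be a topological space and f : X → ℝ a function. Then the pointwise supremum of f on every open subset U of X equals the 'topological essential supremum' T-ess sup_U f (defined as the infimum of all α ∈ ℝ such that {x ∈ U : f(x) > α} is meagre) if and only if for every x₀ ∈ X, every open U containing x₀, and every ε > 0, the set {x ∈ U : f(x) > f(x₀) − ε} is non-meagre. -/
open Set Topology

/-- Topological essential supremum of `f` on `U`. -/
noncomputable def tessSup {X : Type*} [TopologicalSpace X] (f : X → ℝ) (U : Set X) : EReal :=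
  sInf ((fun α : ℝ => (α : EReal)) '' {α : ℝ | IsMeagre {x ∈ U | α < f x}})

theorem stmt0 {X : Type*} [TopologicalSpace X] (f : X → ℝ) :
    (∀ U : Set X, IsOpen U → (⨆ x ∈ U, (f x : EReal)) = tessSup f U) ↔
      (∀ x₀ : X, ∀ U : Set X, IsOpen U → x₀ ∈ U → ∀ ε : ℝ, 0 < ε →
        ¬ IsMeagre {x ∈ U | f x₀ - ε < f x}) := by
  constructor
  · intro h x₀ U hU hx₀ ε hε hm
    have h1 : (f x₀ : EReal) ≤ ⨆ x ∈ U, (f x : EReal) := le_biSup (fun x => (f x : EReal)) hx₀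
    have h2 : tessSup f U ≤ ((f x₀ - ε : ℝ) : EReal) := sInf_le ⟨f x₀ - ε, hm, rfl⟩
    rw [h U hU] at h1
    have h3 : (f x₀ : EReal) ≤ ((f x₀ - ε : ℝ) : EReal) := h1.trans h2
    have := EReal.coe_le_coe_iff.mp h3
    linarith
  · intro h U hU
    apply le_antisymm
    · refine le_sInf ?_
      rintro _ ⟨α, hα, rfl⟩
      refine iSup₂_le fun x hx => ?_
      by_contra hlt
      push_neg at hlt
      have hα' : α < f x := EReal.coe_lt_coe_iff.mp hlt
      refine h x U hU hx (f x - α) (by linarith) ?_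
      have heq : {y ∈ U | f x - (f x - α) < f y} = {y ∈ U | α < f y} := by
        ext y; simp only [mem_setOf_eq, sub_sub_cancel]
      rw [heq]; exact hα
    · rw [← EReal.le_of_forall_lt_iff_le]
      intro c hc
      refine sInf_le ⟨c, show IsMeagre {x ∈ U | c < f x} from ?_, rfl⟩
      have : {x ∈ U | c < f x} = ∅ := by
        ext x
        simp only [mem_setOf_eq, mem_empty_iff_false, iff_false, not_and, not_lt]
        intro hx
        by_contra hlt
        push_neg at hlt
        have h1 : (f x : EReal) ≤ ⨆ x ∈ U, (f x : EReal) := le_biSup (fun x => (f x : EReal)) hx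
        have : (c : EReal) < (f x : EReal) := EReal.coe_lt_coe_iff.mpr hlt
        exact absurd (h1.trans_lt hc) (not_lt.mpr this.le)
      rw [this]; exact IsMeagre.empty
end

section
/- Let X be a topological vector space, C ⊆ X a convex subset that is non-meagre, and U ⊆ X an open subset with U ∩ C ≠ ∅. Then U ∩ C is non-meagre. -/
open Set

theorem stmt2 {X : Type*} [AddCommGroup X] [Module ℝ X] [TopologicalSpace X]
    [IsTopologicalAddGroup X] [ContinuousSMul ℝ X]
    (C U : Set X) (hC : Convex ℝ C) (hCm : ¬ IsMeagre C) (hU : IsOpen U)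
    (hne : (U ∩ C).Nonempty) : ¬ IsMeagre (U ∩ C) := by
  intro hM
  apply hCm
  obtain ⟨x, hxU, hxC⟩ := hne
  -- g q y = x + q • (y - x)
  set g : ℚ → X → X := fun q y => x + (q : ℝ) • (y - x) with hg
  have hcov : C ⊆ ⋃ q : {q : ℚ // 0 < q ∧ (q : ℝ) ≤ 1}, g q ⁻¹' (U ∩ C) := by
    intro y hy
    -- t ↦ x + t • (y - x) is continuous, at 0 it is x ∈ U
    have hcont : Continuous fun t : ℝ => x + t • (y - x) := by fun_prop
    have h0 : (fun t : ℝ => x + t • (y - x)) 0 ∈ U := by simpa using hxU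
    have : ∀ᶠ t : ℝ in nhds 0, x + t • (y - x) ∈ U :=
      hcont.continuousAt.eventually_mem (hU.mem_nhds h0)
    obtain ⟨ε, hε, hball⟩ := Metric.eventually_nhds_iff.mp this
    obtain ⟨q, hq0, hqε⟩ := exists_rat_btwn (lt_min hε one_pos)
    have hq0' : (0 : ℚ) < q := by exact_mod_cast hq0
    have hq1 : (q : ℝ) ≤ 1 := le_of_lt (lt_of_lt_of_le hqε (min_le_right _ _))
    refine mem_iUnion.mpr ⟨⟨q, hq0', hq1⟩, ?_⟩
    constructor
    · apply hball
      simp only [Real.dist_eq, sub_zero, abs_of_pos hq0]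
      exact lt_of_lt_of_le hqε (min_le_left _ _)
    · have := hC hxC hy (a := 1 - (q : ℝ)) (b := (q : ℝ))
        (by linarith) (le_of_lt hq0) (by ring)
      convert this using 1
      simp [g]
      module
  have hmeagre : ∀ q : {q : ℚ // 0 < q ∧ (q : ℝ) ≤ 1}, IsMeagre (g q ⁻¹' (U ∩ C)) := by
    rintro ⟨q, hq0, -⟩
    have hqne : ((q : ℝ)) ≠ 0 := by positivity
    have hcont : Continuous (g q) := by fun_prop
    have hopen : IsOpenMap (g q) := by
      have : g q = (fun z => x + z) ∘ (fun z => (q : ℝ) • z) ∘ (fun y => y - x) := by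
        ext y; simp [g]
      rw [this]
      exact (Homeomorph.addLeft x).isOpenMap.comp
        ((isOpenMap_smul₀ hqne).comp (Homeomorph.subRight x).isOpenMap)
    exact hM.preimage_of_isOpenMap hcont hopen
  have : IsMeagre (⋃ q : {q : ℚ // 0 < q ∧ (q : ℝ) ≤ 1}, g q ⁻¹' (U ∩ C)) := by
    rw [IsMeagre, compl_iUnion]
    exact (countable_iInter_mem ).mpr hmeagre
  exact this.mono hcov
end

section
/- Let X be a Baire topological vector space, C ⊆ X a convex subset, and U ⊆ X an open subset with U \ C ≠ ∅. Then U \ C is non-meagre. -/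
open Set

theorem stmt3 {X : Type*} [AddCommGroup X] [Module ℝ X] [TopologicalSpace X]
    [IsTopologicalAddGroup X] [ContinuousSMul ℝ X] [BaireSpace X]
    (C U : Set X) (hC : Convex ℝ C) (hU : IsOpen U)
    (hne : (U \ C).Nonempty) : ¬ IsMeagre (U \ C) := by
  intro hM
  obtain ⟨x, hxU, hxC⟩ := hne
  -- symmetric open neighborhood W of 0 with x + W ⊆ U
  have hU' : IsOpen ((fun w => x + w) ⁻¹' U) := hU.preimage (by continuity)
  set W : Set X := ((fun w => x + w) ⁻¹' U) ∩ (-((fun w => x + w) ⁻¹' U)) with hW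
  have hWopen : IsOpen W := hU'.inter hU'.neg
  have hW0 : (0 : X) ∈ W := by
    constructor
    · simpa using hxU
    · simpa using hxU
  -- each w ∈ W lies in (U\C - x) ∪ -(U\C - x)
  have hsub : W ⊆ ((fun w => x + w) ⁻¹' (U \ C)) ∪ (-((fun w => x + w) ⁻¹' (U \ C))) := by
    rintro w ⟨h1, h2⟩
    by_contra h
    simp only [mem_union, mem_preimage, mem_neg, mem_diff, not_or, not_and, not_not] at h
    simp only [mem_preimage, mem_neg] at h1 h2
    have hc1 : x + w ∈ C := h.1 h1
    have hc2 : x + -w ∈ C := h.2 h2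
    have : x ∈ C := by
      have := hC hc1 hc2 (by norm_num : (0:ℝ) ≤ 1/2) (by norm_num : (0:ℝ) ≤ 1/2)
        (by norm_num)
      have hx : (1/2 : ℝ) • (x + w) + (1/2 : ℝ) • (x + -w) = x := by
        have : x + w + (x + -w) = (2:ℝ) • x := by
          rw [two_smul]; abel
        rw [← smul_add, this, smul_smul]
        norm_num
      rwa [hx] at this
    exact hxC this
  have hcont : Continuous (fun w : X => x + w) := by continuity
  have hopen : IsOpenMap (fun w : X => x + w) := isOpenMap_add_left x
  have hM1 : IsMeagre ((fun w => x + w) ⁻¹' (U \ C)) :=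
    hM.preimage_of_isOpenMap hcont hopen
  have hM2 : IsMeagre (-((fun w => x + w) ⁻¹' (U \ C))) := by
    have : (-((fun w => x + w) ⁻¹' (U \ C))) = (fun w : X => -w) ⁻¹' ((fun w => x + w) ⁻¹' (U \ C)) := by
      ext y; simp [Set.mem_neg]
    rw [this]
    exact hM1.preimage_of_isOpenMap continuous_neg (Homeomorph.neg X).isOpenMap
  have hMunion : IsMeagre (((fun w => x + w) ⁻¹' (U \ C)) ∪ (-((fun w => x + w) ⁻¹' (U \ C)))) := by
    unfold IsMeagre at *
    rw [compl_union]
    exact Filter.inter_mem hM1 hM2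
  have hMW : IsMeagre W := hMunion.mono hsub
  -- contradiction: nonempty open set in Baire space not meagre
  have hdense : Dense Wᶜ := dense_of_mem_residual hMW
  obtain ⟨y, hyW, hyWc⟩ := hdense.inter_open_nonempty W hWopen ⟨0, hW0⟩
  exact hyWc hyW
end

section
/- Let X be a Baire topological vector space and f : X → ℝ a quasiconvex function. Then for every open subset U ⊆ X, sup_U f = T-ess sup_U f, where T-ess sup_U f := inf {α ∈ ℝ : {x ∈ U : f(x) > α} is meagre}. -/
open Set Topology

lemma isMeagre_union {X : Type*} [TopologicalSpace X] {s t : Set X}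
    (hs : IsMeagre s) (ht : IsMeagre t) : IsMeagre (s ∪ t) := by
  rw [IsMeagre, compl_union]
  exact Filter.inter_mem hs ht

lemma not_isMeagre_of_open {X : Type*} [TopologicalSpace X] [BaireSpace X] {V : Set X}
    (hV : IsOpen V) (hne : V.Nonempty) : ¬ IsMeagre V := by
  intro h
  have hd : Dense Vᶜ := dense_of_mem_residual h
  obtain ⟨y, hy1, hy2⟩ := hd.inter_open_nonempty V hV hne
  exact hy2 hy1

theorem stmt4 {X : Type*} [AddCommGroup X] [Module ℝ X] [TopologicalSpace X]
    [IsTopologicalAddGroup X] [ContinuousSMul ℝ X] [BaireSpace X]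
    (f : X → ℝ) (hf : ∀ α : ℝ, Convex ℝ {x | f x < α})
    (U : Set X) (hU : IsOpen U) :
    (⨆ x ∈ U, (f x : EReal)) = tessSup f U := by
  apply le_antisymm
  · -- sup ≤ tessSup
    refine iSup₂_le fun x hx => le_sInf fun b hb => ?_
    obtain ⟨α, hα, rfl⟩ := hb
    simp only [mem_setOf_eq] at hα
    rw [EReal.coe_le_coe_iff]
    by_contra hxα
    push_neg at hxα
    -- reflection through x
    set r : X ≃ₜ X := Homeomorph.subLeft (x + x) with hr
    set A : Set X := {y ∈ U | α < f y} with hA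
    have hmeagre : IsMeagre (A ∪ r ⁻¹' A) :=
      isMeagre_union hα (hα.preimage_of_isOpenMap r.continuous r.isOpenMap)
    set V : Set X := U ∩ r ⁻¹' U with hV
    have hVopen : IsOpen V := hU.inter (hU.preimage r.continuous)
    have hxV : x ∈ V := by
      constructor
      · exact hx
      · show x + x - x ∈ U
        simpa using hx
    have hsub : V ⊆ A ∪ r ⁻¹' A := by
      rintro y ⟨hyU, hyU'⟩
      by_contra hy
      simp only [mem_union, not_or, mem_preimage, hA, mem_setOf_eq, not_and, not_lt] at hy
      have h1 : f y ≤ α := hy.1 hyU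
      have h2 : f (x + x - y) ≤ α := hy.2 hyU'
      -- quasiconvexity: x is midpoint of y and (x+x-y)
      have hy' : y ∈ {z | f z < f x} := lt_of_le_of_lt h1 hxα
      have hz' : x + x - y ∈ {z | f z < f x} := lt_of_le_of_lt h2 hxα
      have hmid := hf (f x) hy' hz' (by norm_num : (0:ℝ) ≤ 1/2)
        (by norm_num : (0:ℝ) ≤ 1/2) (by norm_num)
      have heq : (1/2 : ℝ) • y + (1/2 : ℝ) • (x + x - y) = x := by module
      rw [heq] at hmid
      exact lt_irrefl (f x) hmid
    have : IsMeagre V := hmeagre.mono hsub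
    exact not_isMeagre_of_open hVopen ⟨x, hxV⟩ this
  · -- tessSup ≤ sup
    rw [← EReal.le_of_forall_lt_iff_le]
    intro z hz
    apply sInf_le
    refine ⟨z, ?_, rfl⟩
    have hempty : {x ∈ U | z < f x} = ∅ := by
      ext y
      simp only [mem_setOf_eq, mem_empty_iff_false, iff_false, not_and, not_lt]
      intro hy
      have : (f y : EReal) ≤ ⨆ x ∈ U, (f x : EReal) := le_iSup₂ (f := fun x _ => (f x : EReal)) y hy
      have := lt_of_le_of_lt this hz
      exact_mod_cast this.le
    simp [hempty, IsMeagre]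
end

section
/- Let X be a Baire topological vector space and f : X → ℝ quasiconvex. If inf_X f = T-ess inf_X f, then for every open subset U ⊆ X, inf_U f = T-ess inf_U f. -/
open Set Topology

/-- Topological essential infimum of `f` on `U`. -/
noncomputable def tessInf {X : Type*} [TopologicalSpace X] (f : X → ℝ) (U : Set X) : EReal :=
  sSup ((fun α : ℝ => (α : EReal)) '' {α : ℝ | IsMeagre {x ∈ U | f x < α}})

theorem stmt5 {X : Type*} [AddCommGroup X] [Module ℝ X] [TopologicalSpace X]
    [IsTopologicalAddGroup X] [ContinuousSMul ℝ X] [BaireSpace X]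
    (f : X → ℝ) (hf : ∀ α : ℝ, Convex ℝ {x | f x < α})
    (h : (⨅ x : X, (f x : EReal)) = tessInf f Set.univ)
    (U : Set X) (hU : IsOpen U) :
    (⨅ x ∈ U, (f x : EReal)) = tessInf f U := by
  apply le_antisymm
  · -- easy direction: inf ≤ tessInf
    by_contra hlt
    push_neg at hlt
    obtain ⟨α, h1, h2⟩ := EReal.exists_between_coe_real hlt
    have hempty : {x ∈ U | f x < α} = ∅ := by
      ext x
      simp only [mem_sep_iff, mem_empty_iff_false, iff_false, not_and, not_lt]
      intro hxU
      have hle : (⨅ x ∈ U, (f x : EReal)) ≤ (f x : EReal) := iInf₂_le x hxU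
      exact_mod_cast (h2.trans_le hle).le
    have hmem : IsMeagre {x ∈ U | f x < α} := by rw [hempty]; exact IsMeagre.empty
    exact absurd (le_sSup ⟨α, hmem, rfl⟩ : (α : EReal) ≤ tessInf f U) (not_le.2 h1)
  · -- hard direction: tessInf ≤ inf
    apply sSup_le
    rintro a ⟨α, hα, rfl⟩
    refine le_iInf₂ fun x₀ hx₀ => ?_
    rw [EReal.coe_le_coe_iff]
    by_contra hfx
    push_neg at hfx
    -- hfx : f x₀ < α
    set C := {x | f x < α} with hC
    have hC_nonmeagre : ¬ IsMeagre C := by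
      intro hCm
      have hmem : IsMeagre {x ∈ (Set.univ : Set X) | f x < α} := by
        simpa [sep_univ] using hCm
      have h1 : (α : EReal) ≤ tessInf f Set.univ := le_sSup ⟨α, hmem, rfl⟩
      have h2 : (⨅ x : X, (f x : EReal)) ≤ (f x₀ : EReal) := iInf_le _ _
      rw [h] at h2
      have : (α : EReal) ≤ (f x₀ : EReal) := h1.trans h2
      exact absurd (by exact_mod_cast this) (not_le.2 hfx)
    apply hC_nonmeagre
    have key : ∀ n : ℕ,
        IsMeagre ((fun z => x₀ + (1 / (n + 1) : ℝ) • (z - x₀)) ⁻¹' {x ∈ U | f x < α}) := by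
      intro n
      have ht : (1 / (n + 1) : ℝ) ≠ 0 := by positivity
      set e : X ≃ₜ X :=
        (Homeomorph.smulOfNeZero ((1 : ℝ) / (n + 1)) ht).trans
          (Homeomorph.addLeft (x₀ - (1 / (n + 1) : ℝ) • x₀)) with he
      have heq : (fun z => x₀ + (1 / (n + 1) : ℝ) • (z - x₀)) = ⇑e := by
        funext z
        show x₀ + (1 / (n + 1) : ℝ) • (z - x₀) = x₀ - (1 / (n + 1) : ℝ) • x₀
          + (1 / (n + 1) : ℝ) • z
        rw [smul_sub]; abel
      rw [heq]
      exact hα.preimage_of_isOpenMap e.continuous e.isOpenMap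
    have cover : C ⊆ ⋃ n : ℕ,
        (fun z => x₀ + (1 / (n + 1) : ℝ) • (z - x₀)) ⁻¹' {x ∈ U | f x < α} := by
      intro z hz
      -- find n with x₀ + (1/(n+1)) • (z - x₀) ∈ U
      have htend : Filter.Tendsto (fun n : ℕ => x₀ + (1 / (n + 1) : ℝ) • (z - x₀))
          Filter.atTop (nhds x₀) := by
        have h0 : Filter.Tendsto (fun n : ℕ => (1 / (n + 1) : ℝ)) Filter.atTop (nhds 0) :=
          tendsto_one_div_add_atTop_nhds_zero_nat
        have := (tendsto_const_nhds : Filter.Tendsto (fun _ : ℕ => x₀)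
          Filter.atTop (nhds x₀)).add (h0.smul_const (z - x₀))
        simpa using this
      obtain ⟨n, hn⟩ := (htend.eventually (hU.mem_nhds hx₀)).exists
      refine mem_iUnion.2 ⟨n, ?_⟩
      have htnn : (0 : ℝ) ≤ 1 / (n + 1) := by positivity
      have htle : (1 / (n + 1) : ℝ) ≤ 1 := by
        rw [div_le_one (by positivity)]
        linarith [Nat.cast_nonneg (α := ℝ) n]
      have hmemC : x₀ + (1 / (n + 1) : ℝ) • (z - x₀) ∈ C := by
        have hcvx := hf α hfx hz (by linarith : (0:ℝ) ≤ 1 - 1 / (n + 1)) htnn (by ring)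
        have heq2 : x₀ + (1 / (n + 1) : ℝ) • (z - x₀)
            = (1 - 1 / (n + 1) : ℝ) • x₀ + (1 / (n + 1) : ℝ) • z := by
          rw [smul_sub, sub_smul, one_smul]; abel
        rw [hC, mem_setOf_eq, heq2]
        exact hcvx
      exact ⟨hn, hmemC⟩
    exact (isMeagre_iUnion key).mono cover
end

section
/- Let X be a Baire topological vector space and f, g : X → ℝ quasiconvex functions that agree outside a meagre set. If inf_X f = T-ess inf_X f = T-ess inf_X g = inf_X g, then f and g have exactly the same points of continuity, and f(x) = g(x) at every such point. -/
open Set Topology Filter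

set_option linter.unusedSectionVars false

section Aux

variable {X : Type*} [AddCommGroup X] [Module ℝ X] [TopologicalSpace X]
    [IsTopologicalAddGroup X] [ContinuousSMul ℝ X]

/-- Preimage of a meagre set under an invertible affine map is meagre. -/
lemma affine_meagre_preimage (a : X) {c : ℝ} (hc : c ≠ 0) {s : Set X} (hs : IsMeagre s) :
    IsMeagre ((fun z : X => a + c • z) ⁻¹' s) := by
  have hfun : ⇑((Homeomorph.smulOfNeZero c hc).trans (Homeomorph.addLeft a)) =
      fun z : X => a + c • z := rfl
  have hcont : Continuous fun z : X => a + c • z := by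
    rw [← hfun]; exact Homeomorph.continuous _
  have hopen : IsOpenMap fun z : X => a + c • z := by
    rw [← hfun]; exact Homeomorph.isOpenMap _
  exact hs.preimage_of_isOpenMap hcont hopen

lemma meagre_union {s t : Set X} (hs : IsMeagre s) (ht : IsMeagre t) : IsMeagre (s ∪ t) := by
  rw [IsMeagre, compl_union]
  exact Filter.inter_mem hs ht

variable [BaireSpace X]

lemma open_not_meagre {U : Set X} (hU : IsOpen U) (hne : U.Nonempty) : ¬ IsMeagre U := by
  intro h
  obtain ⟨x, hxU, hxC⟩ := (dense_of_mem_residual h).inter_open_nonempty U hU hne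
  exact hxC hxU

/-- Midpoint lemma: a convex set comeagre in an open set contains it. -/
lemma open_subset_of_diff_meagre {U C : Set X} (hU : IsOpen U) (hC : Convex ℝ C)
    (h : IsMeagre (U \ C)) : U ⊆ C := by
  intro y hy
  set e : X → X := fun z => (2 : ℝ) • y + (-1 : ℝ) • z with he
  have hmeag : IsMeagre ((U \ C) ∪ e ⁻¹' (U \ C)) :=
    meagre_union h (affine_meagre_preimage _ (by norm_num) h)
  have hey : e y = y := by simp only [he]; module
  have hW : IsOpen (U ∩ e ⁻¹' U) := hU.inter (hU.preimage (by fun_prop))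
  have hyW : y ∈ U ∩ e ⁻¹' U := ⟨hy, by simp [mem_preimage, hey, hy]⟩
  have hgood : ((U ∩ e ⁻¹' U) ∩ {z | z ∈ C ∧ e z ∈ C}).Nonempty := by
    by_contra hempty
    rw [not_nonempty_iff_eq_empty] at hempty
    have hsub : (U ∩ e ⁻¹' U) ⊆ (U \ C) ∪ e ⁻¹' (U \ C) := by
      rintro z ⟨hzU, hzeU⟩
      have hz : ¬ (z ∈ C ∧ e z ∈ C) := fun hzg =>
        (eq_empty_iff_forall_notMem.mp hempty z) ⟨⟨hzU, hzeU⟩, hzg⟩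
      by_cases hzC : z ∈ C
      · exact Or.inr ⟨hzeU, fun hec => hz ⟨hzC, hec⟩⟩
      · exact Or.inl ⟨hzU, hzC⟩
    exact open_not_meagre hW ⟨y, hyW⟩ (hmeag.mono hsub)
  obtain ⟨z, _, hzC, hezC⟩ := hgood
  have hyeq : y = (2⁻¹ : ℝ) • z + (2⁻¹ : ℝ) • e z := by simp only [he]; module
  rw [hyeq]
  exact hC hzC hezC (by norm_num) (by norm_num) (by norm_num)

/-- Scaling lemma: a non-meagre convex set cannot meet an open set in a meagre set. -/
lemma convex_inter_open_empty_of_meagre {C V : Set X} (hC : Convex ℝ C) (hCnm : ¬ IsMeagre C)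
    (hV : IsOpen V) (h : IsMeagre (C ∩ V)) : C ∩ V = ∅ := by
  by_contra hne
  obtain ⟨y, hyC, hyV⟩ := nonempty_iff_ne_empty.mpr hne
  set c : ℕ → ℝ := fun n => 1 / (n + 1) with hc
  have hcpos : ∀ n, 0 < c n := fun n => by positivity
  have hcle : ∀ n, c n ≤ 1 := by
    intro n
    rw [hc, div_le_one (by positivity)]
    exact le_add_of_nonneg_left (Nat.cast_nonneg n)
  set e : ℕ → X → X := fun n z => ((1 - c n) • y) + c n • z with he
  have hcover : C ⊆ ⋃ n, {z ∈ C | e n z ∈ V} := by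
    intro z hz
    have hc0 : Tendsto c atTop (𝓝 (0 : ℝ)) := tendsto_one_div_add_atTop_nhds_zero_nat
    have h1 : Tendsto (fun n => e n z) atTop (𝓝 y) := by
      have : Tendsto (fun n => ((1 - c n) • y) + c n • z) atTop
          (𝓝 ((((1 : ℝ) - 0) • y) + (0 : ℝ) • z)) :=
        (((tendsto_const_nhds.sub hc0).smul_const y).add (hc0.smul_const z))
      simpa using this
    obtain ⟨n, hn⟩ := (h1.eventually_mem (hV.mem_nhds hyV)).exists
    exact mem_iUnion.mpr ⟨n, hz, hn⟩
  have hex : ∃ n, ¬ IsMeagre {z ∈ C | e n z ∈ V} := by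
    by_contra hall
    push_neg at hall
    exact hCnm ((isMeagre_iUnion hall).mono hcover)
  obtain ⟨n, hn⟩ := hex
  apply hn
  have hsub : {z ∈ C | e n z ∈ V} ⊆ (fun z : X => ((1 - c n) • y) + c n • z) ⁻¹' (C ∩ V) := by
    rintro z ⟨hzC, hzV⟩
    exact ⟨hC hyC hzC (by linarith [hcle n]) (hcpos n).le (by ring), hzV⟩
  exact (affine_meagre_preimage _ (hcpos n).ne' h).mono hsub

/-- Main transfer lemma. -/
lemma main_transfer (g : X → ℝ) (hg : ∀ α : ℝ, Convex ℝ {x | g x < α})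
    (D : Set X) (hD : IsMeagre D) (m : EReal)
    (hgm : ∀ x, m ≤ (g x : EReal))
    (hnm : ∀ β : ℝ, m < (β : EReal) → ¬ IsMeagre {x | g x < β})
    (f : X → ℝ) (hfg : ∀ x, x ∉ D → f x = g x)
    (x₀ : X) (hcont : ContinuousAt f x₀) :
    g x₀ = f x₀ ∧ ContinuousAt g x₀ := by
  have hupper : ∀ α : ℝ, f x₀ < α → ∃ U : Set X, IsOpen U ∧ x₀ ∈ U ∧ ∀ y ∈ U, g y < α := by
    intro α hα
    obtain ⟨U, hUsub, hUopen, hxU⟩ := mem_nhds_iff.mp (hcont (Iio_mem_nhds hα))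
    refine ⟨U, hUopen, hxU, fun y hy => ?_⟩
    have hsub : U \ {x | g x < α} ⊆ D := by
      rintro z ⟨hzU, hz⟩
      by_contra hzD
      have hlt : f z < α := hUsub hzU
      rw [hfg z hzD] at hlt
      exact hz hlt
    exact open_subset_of_diff_meagre hUopen (hg α) (hD.mono hsub) hy
  have hlower : ∀ β : ℝ, β < f x₀ → ∃ V : Set X, IsOpen V ∧ x₀ ∈ V ∧ ∀ y ∈ V, β ≤ g y := by
    intro β hβ
    by_cases hm : (β : EReal) ≤ m
    · exact ⟨univ, isOpen_univ, mem_univ _,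
        fun y _ => EReal.coe_le_coe_iff.mp (hm.trans (hgm y))⟩
    · push_neg at hm
      obtain ⟨V, hVsub, hVopen, hxV⟩ := mem_nhds_iff.mp (hcont (Ioi_mem_nhds hβ))
      have hsub : {x | g x < β} ∩ V ⊆ D := by
        rintro z ⟨hz, hzV⟩
        by_contra hzD
        have hfz : f z = g z := hfg z hzD
        have : f z < β := hfz ▸ hz
        exact absurd (hVsub hzV) (not_lt.mpr this.le)
      have hempty := convex_inter_open_empty_of_meagre (hg β) (hnm β hm) hVopen (hD.mono hsub)
      refine ⟨V, hVopen, hxV, fun y hy => ?_⟩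
      by_contra hy2
      push_neg at hy2
      exact (eq_empty_iff_forall_notMem.mp hempty y) ⟨hy2, hy⟩
  have hle : g x₀ ≤ f x₀ := by
    by_contra hlt
    push_neg at hlt
    obtain ⟨U, _, hxU, hU⟩ := hupper (g x₀) hlt
    exact lt_irrefl _ (hU x₀ hxU)
  have hge : f x₀ ≤ g x₀ := by
    by_contra hlt
    push_neg at hlt
    obtain ⟨V, _, hxV, hV⟩ := hlower ((g x₀ + f x₀) / 2) (by linarith)
    have := hV x₀ hxV
    linarith
  have heq : g x₀ = f x₀ := le_antisymm hle hge
  refine ⟨heq, ?_⟩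
  rw [ContinuousAt, Metric.tendsto_nhds]
  intro ε hε
  obtain ⟨U, hUo, hxU, hU⟩ := hupper (f x₀ + ε) (by linarith)
  obtain ⟨V, hVo, hxV, hV⟩ := hlower (f x₀ - ε / 2) (by linarith)
  filter_upwards [hUo.mem_nhds hxU, hVo.mem_nhds hxV] with y hyU hyV
  have h1 := hU y hyU
  have h2 := hV y hyV
  rw [Real.dist_eq, abs_lt]
  constructor <;> [linarith [heq.le, heq.ge]; linarith [heq.le, heq.ge]]

lemma tessInf_nonmeagre (h : X → ℝ) (β : ℝ) (hβ : tessInf h Set.univ < (β : EReal)) :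
    ¬ IsMeagre {x | h x < β} := by
  intro hm
  have hmem : β ∈ {α : ℝ | IsMeagre {x ∈ Set.univ | h x < α}} := by
    rw [mem_setOf_eq, Set.sep_univ]; exact hm
  have hle : (β : EReal) ≤ tessInf h Set.univ := by
    unfold tessInf
    exact le_sSup (mem_image_of_mem _ hmem)
  exact absurd hle (not_le.mpr hβ)

end Aux

theorem stmt7 {X : Type*} [AddCommGroup X] [Module ℝ X] [TopologicalSpace X]
    [IsTopologicalAddGroup X] [ContinuousSMul ℝ X] [BaireSpace X]
    (f g : X → ℝ) (hf : ∀ α : ℝ, Convex ℝ {x | f x < α})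
    (hg : ∀ α : ℝ, Convex ℝ {x | g x < α})
    (hfg : IsMeagre {x | f x ≠ g x})
    (h1 : (⨅ x : X, (f x : EReal)) = tessInf f Set.univ)
    (h2 : tessInf f Set.univ = tessInf g Set.univ)
    (h3 : tessInf g Set.univ = ⨅ x : X, (g x : EReal)) :
    (∀ x : X, ContinuousAt f x ↔ ContinuousAt g x) ∧
      (∀ x : X, ContinuousAt f x → f x = g x) := by
  have hfm : ∀ x, tessInf f Set.univ ≤ (f x : EReal) := fun x => by
    rw [← h1]; exact iInf_le _ x
  have hgm : ∀ x, tessInf f Set.univ ≤ (g x : EReal) := fun x => by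
    rw [h2, h3]; exact iInf_le _ x
  have hnmf : ∀ β : ℝ, tessInf f Set.univ < (β : EReal) → ¬ IsMeagre {x | f x < β} :=
    fun β hβ => tessInf_nonmeagre f β hβ
  have hnmg : ∀ β : ℝ, tessInf f Set.univ < (β : EReal) → ¬ IsMeagre {x | g x < β} :=
    fun β hβ => tessInf_nonmeagre g β (h2 ▸ hβ)
  have hfg' : ∀ x, x ∉ {x | f x ≠ g x} → f x = g x := fun x hx => of_not_not hx
  have hgf' : ∀ x, x ∉ {x | f x ≠ g x} → g x = f x := fun x hx => (of_not_not hx).symm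
  have main1 : ∀ x, ContinuousAt f x → g x = f x ∧ ContinuousAt g x := fun x hx =>
    main_transfer g hg _ hfg _ hgm hnmg f hfg' x hx
  have main2 : ∀ x, ContinuousAt g x → f x = g x ∧ ContinuousAt f x := fun x hx =>
    main_transfer f hf _ hfg _ hfm hnmf g hgf' x hx
  exact ⟨fun x => ⟨fun h => (main1 x h).2, fun h => (main2 x h).2⟩,
    fun x h => ((main1 x h).1).symm⟩
end

section
/- Let X be a Baire topological vector space, f : X → ℝ quasiconvex, m := T-ess inf_X f. Assume that the interior of F_α = {x : f(x) < α} is nonempty for every α > m. Then the function f̄(x) := inf {α ∈ ℝ : x ∈ interior F_α} is real-valued and the set {x : f(x) ≠ f̄(x)} is meagre. -/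
open Set Topology

/-- The usc hull construction `f̄`. -/
noncomputable def uscHull {X : Type*} [TopologicalSpace X] (f : X → ℝ) (x : X) : EReal :=
  sInf ((fun α : ℝ => (α : EReal)) '' {α : ℝ | x ∈ interior {y | f y < α}})

section Aux

variable {X : Type*} [AddCommGroup X] [Module ℝ X] [TopologicalSpace X]
    [IsTopologicalAddGroup X] [ContinuousSMul ℝ X]

/-- For a convex set with nonempty interior, the interior of the closure equals the interior. -/
lemma my_interior_closure_subset {s : Set X} (hs : Convex ℝ s) {x₀ : X}
    (hx₀ : x₀ ∈ interior s) : interior (closure s) ⊆ interior s := by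
  intro y hy
  have hcont : Continuous fun t : ℝ => y + t • (y - x₀) := by continuity
  have h0 : y + (0 : ℝ) • (y - x₀) ∈ interior (closure s) := by simpa using hy
  have hev : ∀ᶠ t in 𝓝 (0 : ℝ), y + t • (y - x₀) ∈ interior (closure s) :=
    hcont.continuousAt.preimage_mem_nhds (isOpen_interior.mem_nhds h0)
  obtain ⟨ε, hε0, hε⟩ := Metric.eventually_nhds_iff.mp hev
  set t : ℝ := ε / 2 with ht_def
  have ht0 : (0 : ℝ) < t := by positivity
  have htmem : y + t • (y - x₀) ∈ closure s := by
    have : dist t (0 : ℝ) < ε := by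
      rw [Real.dist_eq, sub_zero, abs_of_pos ht0]
      linarith
    exact interior_subset (hε this)
  have h1t : (0 : ℝ) < 1 + t := by linarith
  have hab : t / (1 + t) + 1 / (1 + t) = 1 := by field_simp; ring
  have hcombo := hs.combo_interior_closure_mem_interior hx₀ htmem
    (div_pos ht0 h1t) (le_of_lt (div_pos one_pos h1t)) hab
  have heq : (t / (1 + t)) • x₀ + (1 / (1 + t)) • (y + t • (y - x₀)) = y := by
    have h1t' : (1 + t) ≠ 0 := ne_of_gt h1t
    match_scalars <;> field_simp <;> ring
  rwa [heq] at hcombo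

/-- A convex set with nonempty interior, minus its interior, is meagre. -/
lemma my_meagre_diff_interior {s : Set X} (hs : Convex ℝ s)
    (h : (interior s).Nonempty) : IsMeagre (s \ interior s) := by
  obtain ⟨x₀, hx₀⟩ := h
  have heq : interior (closure s) = interior s :=
    subset_antisymm (my_interior_closure_subset hs hx₀) (interior_mono subset_closure)
  have hsub : s \ interior s ⊆ frontier (closure s) := by
    rw [frontier, closure_closure, heq]
    exact diff_subset_diff_left subset_closure
  have hnwd : IsNowhereDense (frontier (closure s)) := by
    rw [IsClosed.isNowhereDense_iff isClosed_frontier]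
    exact interior_frontier isClosed_closure
  refine IsMeagre.mono hsub ?_
  rw [isMeagre_iff_countable_union_isNowhereDense]
  exact ⟨{frontier (closure s)}, by simpa using hnwd, countable_singleton _, by simp⟩

end Aux

theorem stmt11 {X : Type*} [AddCommGroup X] [Module ℝ X] [TopologicalSpace X]
    [IsTopologicalAddGroup X] [ContinuousSMul ℝ X] [BaireSpace X]
    (f : X → ℝ) (hf : ∀ α : ℝ, Convex ℝ {x | f x < α})
    (m : EReal) (hm : m = tessInf f Set.univ)
    (hint : ∀ α : ℝ, m < (α : EReal) → (interior {x | f x < α}).Nonempty) :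
    (∀ x : X, ∃ r : ℝ, uscHull f x = (r : EReal)) ∧
      IsMeagre {x | (f x : EReal) ≠ uscHull f x} := by
  rcases isEmpty_or_nonempty X with hX | hX
  · constructor
    · exact fun x => (IsEmpty.false x).elim
    · have : {x : X | (f x : EReal) ≠ uscHull f x} = ∅ := by
        ext x; exact (IsEmpty.false x).elim
      rw [this]; exact IsMeagre.empty
  -- rewrite m
  have hm' : m = sSup ((fun α : ℝ => (α : EReal)) '' {α : ℝ | IsMeagre {x : X | f x < α}}) := by
    rw [hm, tessInf]
    congr 1
    ext b
    simp only [mem_image, mem_setOf_eq, sep_univ]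
  -- sublevel sets below m are meagre
  have hmeag : ∀ q : ℝ, (q : EReal) ≤ m → IsMeagre {x : X | f x < q} := by
    intro q hq
    have hun : {x : X | f x < q} = ⋃ n : ℕ, {x : X | f x < q - 1 / (n + 1)} := by
      ext x
      simp only [mem_iUnion, mem_setOf_eq]
      constructor
      · intro h
        obtain ⟨n, hn⟩ := exists_nat_one_div_lt (sub_pos.mpr h)
        exact ⟨n, by push_cast at hn ⊢; linarith⟩
      · rintro ⟨n, hn⟩
        have : (0 : ℝ) < 1 / ((n : ℝ) + 1) := by positivity
        linarith
    rw [hun]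
    apply isMeagre_iUnion
    intro n
    have hlt : ((q - 1 / ((n : ℝ) + 1) : ℝ) : EReal) < m := by
      refine lt_of_lt_of_le ?_ hq
      have : (0 : ℝ) < 1 / ((n : ℝ) + 1) := by positivity
      exact_mod_cast (by linarith : q - 1 / ((n : ℝ) + 1) < q)
    rw [hm'] at hlt
    obtain ⟨b, hb, hlt'⟩ := lt_sSup_iff.mp hlt
    obtain ⟨β, hβ, rfl⟩ := hb
    have hlt2 : ((q - 1 / ((n : ℝ) + 1) : ℝ) : EReal) < (β : EReal) := hlt'
    have hle : q - 1 / ((n : ℝ) + 1) ≤ β := le_of_lt (by exact_mod_cast hlt2)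
    exact hβ.mono (fun x hx => by
      simp only [mem_setOf_eq] at hx ⊢
      exact lt_of_lt_of_le hx hle)
  -- m < ⊤
  have hmtop : m < ⊤ := by
    by_contra h
    push_neg at h
    have hmt : m = ⊤ := top_le_iff.mp h
    have hall : ∀ n : ℕ, IsMeagre {x : X | f x < n} := fun n =>
      hmeag n (by rw [hmt]; exact le_top)
    have huniv : (univ : Set X) = ⋃ n : ℕ, {x : X | f x < n} := by
      ext x
      simp only [mem_univ, mem_iUnion, mem_setOf_eq, true_iff]
      exact exists_nat_gt (f x)
    have hmu : IsMeagre (univ : Set X) := huniv ▸ isMeagre_iUnion hall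
    have hd : Dense ((univ : Set X)ᶜ) := dense_of_mem_residual hmu
    rw [compl_univ] at hd
    exact absurd hd.nonempty (by simp)
  -- pick α₀ > m and x₀ in interior of F_{α₀}
  obtain ⟨α₀, hα₀m, -⟩ := EReal.lt_iff_exists_real_btwn.mp hmtop
  obtain ⟨x₀, hx₀⟩ := hint α₀ hα₀m
  -- every point is in the interior of some sublevel set
  have hmem : ∀ x : X, ∃ β : ℝ, x ∈ interior {y : X | f y < β} := by
    intro x
    set z : X := (2 : ℝ) • x - x₀ with hz_def
    set β : ℝ := max α₀ (f z) + 1 with hβ_def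
    refine ⟨β, ?_⟩
    have hsub : {y : X | f y < α₀} ⊆ {y : X | f y < β} := fun y hy => by
      simp only [mem_setOf_eq] at hy ⊢
      have := le_max_left α₀ (f z)
      linarith
    have hx₀' : x₀ ∈ interior {y : X | f y < β} := interior_mono hsub hx₀
    have hz : z ∈ {y : X | f y < β} := by
      simp only [mem_setOf_eq]
      have := le_max_right α₀ (f z)
      linarith
    have hcombo := (hf β).combo_interior_self_mem_interior hx₀' hz
      (by norm_num : (0 : ℝ) < 1 / 2) (by norm_num : (0 : ℝ) ≤ 1 / 2) (by norm_num)
    have heq : (1 / 2 : ℝ) • x₀ + (1 / 2 : ℝ) • z = x := by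
      rw [hz_def]; module
    rwa [heq] at hcombo
  -- lower bound: f x ≤ uscHull f x
  have hlb : ∀ x : X, (f x : EReal) ≤ uscHull f x := by
    intro x
    refine le_sInf ?_
    rintro b ⟨α, hα, rfl⟩
    have hα' : x ∈ interior {y | f y < α} := hα
    have hfx : f x < α := show x ∈ {y | f y < α} from interior_subset hα'
    show (f x : EReal) ≤ (α : EReal)
    exact_mod_cast hfx.le
  -- upper bound
  have hub : ∀ (x : X) (β : ℝ), x ∈ interior {y : X | f y < β} →
      uscHull f x ≤ (β : EReal) := fun x β hβ => sInf_le ⟨β, hβ, rfl⟩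
  -- goal 1
  have hreal : ∀ x : X, ∃ r : ℝ, uscHull f x = (r : EReal) := by
    intro x
    obtain ⟨β, hβ⟩ := hmem x
    have h1 := hlb x
    have h2 := hub x β hβ
    have hnb : uscHull f x ≠ ⊥ := ((EReal.bot_lt_coe (f x)).trans_le h1).ne'
    have hnt : uscHull f x ≠ ⊤ := (h2.trans_lt (EReal.coe_lt_top β)).ne
    exact ⟨(uscHull f x).toReal, (EReal.coe_toReal hnt hnb).symm⟩
  refine ⟨hreal, ?_⟩
  -- each frontier-ish set is meagre
  have hq : ∀ q : ℚ, IsMeagre ({x : X | f x < (q : ℝ)} \ interior {x : X | f x < (q : ℝ)}) := by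
    intro q
    by_cases hqm : ((q : ℝ) : EReal) ≤ m
    · exact (hmeag q hqm).mono diff_subset
    · push_neg at hqm
      exact my_meagre_diff_interior (hf q) (hint q hqm)
  -- cover
  have hcover : {x : X | (f x : EReal) ≠ uscHull f x} ⊆
      ⋃ q : ℚ, ({x : X | f x < (q : ℝ)} \ interior {x : X | f x < (q : ℝ)}) := by
    intro x hx
    have hlt : (f x : EReal) < uscHull f x := lt_of_le_of_ne (hlb x) hx
    obtain ⟨r, hr⟩ := hreal x
    rw [hr] at hlt
    have hlt' : f x < r := by exact_mod_cast hlt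
    obtain ⟨q, hq1, hq2⟩ := exists_rat_btwn hlt'
    refine mem_iUnion.mpr ⟨q, hq1, fun hmem' => ?_⟩
    have h3 := hub x q hmem'
    rw [hr] at h3
    have : r ≤ (q : ℝ) := by exact_mod_cast h3
    linarith
  refine IsMeagre.mono hcover ?_
  -- reindex the union over ℚ by ℕ
  obtain ⟨e⟩ : Nonempty (ℕ ≃ ℚ) := ⟨(Denumerable.eqv ℚ).symm⟩
  rw [← e.surjective.iUnion_comp
    (fun q : ℚ => {x : X | f x < (q : ℝ)} \ interior {x : X | f x < (q : ℝ)})]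
  exact isMeagre_iUnion fun n => hq (e n)
end

section
/- Let X be a Baire topological vector space, f : X → ℝ quasiconvex with meagre set of discontinuity points, and let α ∈ ℝ with {x : f(x) < α} not nowhere dense. Then {x : f(x) ≤ α} has nonempty interior. -/
open Set Topology

theorem stmt14 {X : Type*} [AddCommGroup X] [Module ℝ X] [TopologicalSpace X]
    [IsTopologicalAddGroup X] [ContinuousSMul ℝ X] [BaireSpace X]
    (f : X → ℝ) (hf : ∀ α : ℝ, Convex ℝ {x | f x < α})
    (hf' : ∀ α : ℝ, Convex ℝ {x | f x ≤ α})
    (hd : IsMeagre {x | ¬ ContinuousAt f x})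
    (α : ℝ) (hα : ¬ IsNowhereDense {x | f x < α}) :
    (interior {x | f x ≤ α}).Nonempty := by
  rw [IsNowhereDense, ← Ne, ← nonempty_iff_ne_empty] at hα
  set W := interior (closure {x | f x < α}) with hW
  -- every continuity point in the closure of {f < α} satisfies f ≤ α
  have key : ∀ y ∈ closure {x | f x < α}, ContinuousAt f y → f y ≤ α := by
    intro y hy hc
    by_contra h
    push_neg at h
    have hnb : f ⁻¹' Ioi α ∈ 𝓝 y := hc (Ioi_mem_nhds h)
    obtain ⟨z, hz1, hz2⟩ := mem_closure_iff_nhds.mp hy _ hnb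
    have h1 : α < f z := hz1
    have h2 : f z < α := hz2
    exact lt_asymm h1 h2
  -- main claim: W ⊆ {f ≤ α}
  have main : W ⊆ {x | f x ≤ α} := by
    intro w hw
    -- reflection around w
    set g : X ≃ₜ X := (Homeomorph.neg X).trans (Homeomorph.addLeft (w + w)) with hg
    have hgdef : ∀ x, g x = (w + w) + (-x) := fun x => rfl
    -- the bad (meagre) set
    set M := {x | ¬ ContinuousAt f x} with hM
    have hM2 : IsMeagre (⇑g ⁻¹' M) :=
      hd.preimage_of_isOpenMap g.continuous g.isOpenMap
    have hbad : IsMeagre (M ∪ ⇑g ⁻¹' M) := by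
      rw [IsMeagre, compl_union]
      exact Filter.inter_mem hd hM2
    have hdense : Dense (M ∪ ⇑g ⁻¹' M)ᶜ := dense_of_mem_residual hbad
    -- small open neighborhood of w stable under g
    have hVopen : IsOpen (W ∩ ⇑g ⁻¹' W) :=
      isOpen_interior.inter (isOpen_interior.preimage g.continuous)
    have hwV : w ∈ W ∩ ⇑g ⁻¹' W := by
      refine ⟨hw, ?_⟩
      show g w ∈ W
      have : g w = w := by rw [hgdef]; abel
      rwa [this]
    obtain ⟨u, hu2, hu1⟩ := hdense.inter_open_nonempty _ hVopen ⟨w, hwV⟩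
    rw [mem_compl_iff, mem_union, not_or] at hu1
    have hcu : ContinuousAt f u := not_not.mp hu1.1
    have hcgu : ContinuousAt f (g u) := not_not.mp hu1.2
    have hfu : f u ≤ α := key u (interior_subset hu2.1) hcu
    have hfgu : f (g u) ≤ α := key (g u) (interior_subset hu2.2) hcgu
    -- w is the midpoint of u and g u
    have hmid : (1/2 : ℝ) • u + (1/2 : ℝ) • (g u) = w := by
      rw [hgdef]; match_scalars <;> norm_num
    have := hf' α hfu hfgu (by norm_num : (0:ℝ) ≤ 1/2) (by norm_num : (0:ℝ) ≤ 1/2)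
      (by norm_num)
    rw [hmid] at this
    exact this
  obtain ⟨w, hw⟩ := hα
  exact ⟨w, interior_mono main (by rwa [interior_interior])⟩
end

section
/- Let X be a Baire topological vector space and f : X → ℝ quasiconvex with m := T-ess inf_X f. If interior {f ≤ α} ≠ ∅ for every α > m and inf_X f = m (in particular if m = −∞), then the set of points of discontinuity of f is meagre. -/
open Set Topology

/-- The frontier of a convex set with nonempty interior is nowhere dense. -/
lemma convex_frontier_isNowhereDense {X : Type*} [AddCommGroup X] [Module ℝ X]
    [TopologicalSpace X] [IsTopologicalAddGroup X] [ContinuousSMul ℝ X]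
    {s : Set X} (hs : Convex ℝ s) (h : (interior s).Nonempty) :
    IsNowhereDense (frontier s) := by
  rw [isClosed_frontier.isNowhereDense_iff, eq_empty_iff_forall_notMem]
  intro x hx
  obtain ⟨y, hy⟩ := h
  have hxc : x ∈ closure s := interior_subset hx |>.1
  -- the path t ↦ t • x + (1 - t) • y tends to x as t → 1⁻, staying in interior s
  have hcont : Filter.Tendsto (fun t : ℝ => t • x + (1 - t) • y) (𝓝[<] (1 : ℝ)) (𝓝 x) := by
    have : Continuous fun t : ℝ => t • x + (1 - t) • y :=
      (continuous_id.smul continuous_const).add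
        ((continuous_const.sub continuous_id).smul continuous_const)
    have h1 : Filter.Tendsto (fun t : ℝ => t • x + (1 - t) • y) (𝓝[<] (1 : ℝ))
        (𝓝 ((1:ℝ) • x + (1 - 1 : ℝ) • y)) :=
      (this.tendsto 1).mono_left nhdsWithin_le_nhds
    simpa using h1
  have hev : ∀ᶠ t : ℝ in 𝓝[<] (1 : ℝ), t • x + (1 - t) • y ∈ interior (frontier s) :=
    hcont (isOpen_interior.mem_nhds hx)
  have hpos : ∀ᶠ t : ℝ in 𝓝[<] (1 : ℝ), (0 : ℝ) < t :=
    ((eventually_gt_nhds (by norm_num : (0:ℝ) < 1))).filter_mono nhdsWithin_le_nhds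
  have hlt : ∀ᶠ t : ℝ in 𝓝[<] (1 : ℝ), t < 1 := eventually_mem_nhdsWithin
  obtain ⟨t, ht1, ht2, ht3⟩ := (hev.and (hpos.and hlt)).exists
  have hmem : t • x + (1 - t) • y ∈ interior s :=
    hs.combo_closure_interior_mem_interior hxc hy (le_of_lt ht2) (by linarith) (by ring)
  have : t • x + (1 - t) • y ∈ frontier s := interior_subset ht1
  exact this.2 hmem

theorem stmt15 {X : Type*} [AddCommGroup X] [Module ℝ X] [TopologicalSpace X]
    [IsTopologicalAddGroup X] [ContinuousSMul ℝ X] [BaireSpace X]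
    (f : X → ℝ) (hf : ∀ α : ℝ, Convex ℝ {x | f x < α})
    (m : EReal) (hm : m = tessInf f Set.univ)
    (h1 : ∀ α : ℝ, m < (α : EReal) → (interior {x | f x ≤ α}).Nonempty)
    (h2 : (⨅ x : X, (f x : EReal)) = m) :
    IsMeagre {x | ¬ ContinuousAt f x} := by
  -- f is bounded below by m
  have hmle : ∀ x : X, m ≤ ((f x : ℝ) : EReal) := fun x => h2 ▸ iInf_le _ x
  -- closed sublevel sets are convex
  have hconv : ∀ q : ℝ, Convex ℝ {x | f x ≤ q} := by
    intro q
    have : {x | f x ≤ q} = ⋂ n : ℕ, {x | f x < q + 1 / (n + 1)} := by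
      ext x
      simp only [mem_setOf_eq, mem_iInter]
      constructor
      · intro h n
        have : (0:ℝ) < 1 / (n + 1) := by positivity
        linarith
      · intro h
        by_contra hlt
        push_neg at hlt
        obtain ⟨n, hn⟩ := exists_nat_one_div_lt (ε := f x - q) (by linarith)
        have := h n
        linarith
    rw [this]
    exact convex_iInter fun n => hf _
  -- the family of frontiers indexed by rationals above m
  set T : ℚ → Set X := fun q =>
    if m < ((q : ℝ) : EReal) then frontier {x | f x ≤ (q : ℝ)} else ∅ with hT
  have hTmeagre : ∀ q : ℚ, IsMeagre (T q) := by
    intro q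
    show IsMeagre (if m < ((q : ℝ) : EReal) then frontier {x | f x ≤ (q : ℝ)} else ∅)
    split_ifs with hq
    · have hnd : IsNowhereDense (frontier {x | f x ≤ (q : ℝ)}) :=
        convex_frontier_isNowhereDense (hconv q) (h1 q hq)
      rw [isMeagre_iff_countable_union_isNowhereDense]
      exact ⟨{frontier {x | f x ≤ (q : ℝ)}}, by simpa using hnd, countable_singleton _,
        by simp⟩
    · exact IsMeagre.empty
  -- discontinuity points are contained in the union of the T q
  have hsub : {x | ¬ ContinuousAt f x} ⊆ ⋃ q : ℚ, T q := by
    intro x hx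
    by_contra hxu
    apply hx
    rw [ContinuousAt, tendsto_order]
    constructor
    · -- lower bound
      intro a ha
      obtain ⟨q, hq1, hq2⟩ := exists_rat_btwn ha
      by_cases hqm : m < ((q : ℝ) : EReal)
      · have hxnot : x ∉ closure {y | f y ≤ (q : ℝ)} := by
          intro hxc
          have hxT : x ∉ T q := fun h => hxu (mem_iUnion.2 ⟨q, h⟩)
          rw [hT] at hxT
          simp only [if_pos hqm] at hxT
          have hxint : x ∈ interior {y | f y ≤ (q : ℝ)} := by
            by_contra hxint
            exact hxT ⟨hxc, hxint⟩
          have : x ∈ {y | f y ≤ (q : ℝ)} := interior_subset hxint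
          simp only [mem_setOf_eq] at this
          linarith
        have hopen : IsOpen (closure {y | f y ≤ (q : ℝ)})ᶜ := isClosed_closure.isOpen_compl
        filter_upwards [hopen.mem_nhds hxnot] with y hy
        have : ¬ f y ≤ (q : ℝ) := fun h => hy (subset_closure h)
        linarith [not_le.mp this]
      · -- q ≤ m, so f ≥ q everywhere
        push_neg at hqm
        filter_upwards with y
        have : ((q : ℝ) : EReal) ≤ ((f y : ℝ) : EReal) := le_trans hqm (hmle y)
        have : (q : ℝ) ≤ f y := by exact_mod_cast this
        linarith
    · -- upper bound
      intro b hb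
      obtain ⟨q, hq1, hq2⟩ := exists_rat_btwn hb
      have hqm : m < ((q : ℝ) : EReal) :=
        lt_of_le_of_lt (hmle x) (by exact_mod_cast hq1)
      have hxT : x ∉ T q := fun h => hxu (mem_iUnion.2 ⟨q, h⟩)
      rw [hT] at hxT
      simp only [if_pos hqm] at hxT
      have hxmem : x ∈ {y | f y ≤ (q : ℝ)} := le_of_lt hq1
      have hxint : x ∈ interior {y | f y ≤ (q : ℝ)} := by
        by_contra hxint
        exact hxT ⟨subset_closure hxmem, hxint⟩
      filter_upwards [isOpen_interior.mem_nhds hxint] with y hy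
      have : y ∈ {y | f y ≤ (q : ℝ)} := interior_subset hy
      simp only [mem_setOf_eq] at this
      linarith
  -- conclude: countable union of meagre sets
  have : IsMeagre (⋃ q : ℚ, T q) := by
    have e : ℕ ≃ ℚ := (Denumerable.eqv ℚ).symm
    have : (⋃ n : ℕ, T (e n)) = ⋃ q : ℚ, T q := e.iSup_comp (g := T)
    rw [← this]
    exact isMeagre_iUnion fun n => hTmeagre (e n)
  exact this.mono hsub
end

section
/- Let X be a Baire topological vector space and f : X → ℝ quasiconvex with m := T-ess inf_X f. If interior {f < α} ≠ ∅ for all α > m, and either m = −∞ or (m > −∞ and f⁻¹(m) is meagre), then the set of discontinuity points of f is meagre and moreover {f < m} and f⁻¹(m) are nowhere dense. -/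
open Set Topology

private lemma aux_int_cl {X : Type*} [AddCommGroup X] [Module ℝ X]
    [TopologicalSpace X] [IsTopologicalAddGroup X] [ContinuousSMul ℝ X]
    {s : Set X} (hs : Convex ℝ s) {x : X} (hx : x ∈ interior s) :
    interior (closure s) ⊆ interior s := by
  intro z hz
  have hcont : Continuous fun t : ℝ => z + t • (z - x) := by continuity
  have hev : ∀ᶠ t in 𝓝 (0:ℝ), z + t • (z - x) ∈ interior (closure s) := by
    have h := hcont.continuousAt (x := (0:ℝ))
    rw [ContinuousAt] at h
    have h0 : z + (0:ℝ) • (z - x) = z := by simp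
    rw [h0] at h
    exact h (isOpen_interior.mem_nhds hz)
  obtain ⟨t, hmem, ht⟩ :=
    ((hev.filter_mono (nhdsWithin_le_nhds (s := Set.Ioi (0:ℝ)))).and
      self_mem_nhdsWithin).exists
  have ht : (0:ℝ) < t := ht
  have h1t : (0:ℝ) < 1 + t := by linarith
  have hw : z + t • (z - x) ∈ closure s := interior_subset hmem
  have key : (t/(1+t)) • x + (1/(1+t)) • (z + t • (z - x)) = z := by
    have h1t' : (1:ℝ) + t ≠ 0 := ne_of_gt h1t
    match_scalars <;> field_simp <;> ring
  have := hs.combo_interior_closure_mem_interior hx hw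
    (a := t/(1+t)) (b := 1/(1+t)) (by positivity) (by positivity) (by field_simp; ring)
  rwa [key] at this

theorem stmt16 {X : Type*} [AddCommGroup X] [Module ℝ X] [TopologicalSpace X]
    [IsTopologicalAddGroup X] [ContinuousSMul ℝ X] [BaireSpace X]
    (f : X → ℝ) (hf : ∀ α : ℝ, Convex ℝ {x | f x < α})
    (m : EReal) (hm : m = tessInf f Set.univ)
    (h1 : ∀ α : ℝ, m < (α : EReal) → (interior {x | f x < α}).Nonempty)
    (h2 : m = ⊥ ∨ (⊥ < m ∧ IsMeagre {x | (f x : EReal) = m})) :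
    IsMeagre {x | ¬ ContinuousAt f x} ∧
      IsNowhereDense {x | (f x : EReal) < m} ∧
      IsNowhereDense {x | (f x : EReal) = m} := by
  have hne : Nonempty X := ⟨0⟩
  -- countable unions over ℚ
  have hcount : ∀ (s : ℚ → Set X), (∀ q, IsMeagre (s q)) → IsMeagre (⋃ q, s q) := by
    intro s hs
    have he : (⋃ q, s q) = ⋃ n : ℕ, s ((Denumerable.eqv ℚ).symm n) := by
      ext x
      simp only [mem_iUnion]
      constructor
      · rintro ⟨q, hq⟩
        exact ⟨Denumerable.eqv ℚ q, by simpa using hq⟩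
      · rintro ⟨n, hn⟩
        exact ⟨_, hn⟩
    rw [he]
    exact isMeagre_iUnion fun n => hs _
  have hunion : ∀ s t : Set X, IsMeagre s → IsMeagre t → IsMeagre (s ∪ t) := by
    intro s t hs ht
    rw [IsMeagre, compl_union]
    exact Filter.inter_mem hs ht
  have hnwdm : ∀ s : Set X, IsNowhereDense s → IsMeagre s := by
    intro s hs
    rw [isMeagre_iff_countable_union_isNowhereDense]
    exact ⟨{s}, by simpa using hs, countable_singleton s, by simp⟩
  -- sublevel sets below m are meagre
  have hmeag : ∀ α : ℝ, (α : EReal) < m → IsMeagre {x | f x < α} := by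
    intro α hα
    rw [hm, tessInf, lt_sSup_iff] at hα
    obtain ⟨b, hb, hab⟩ := hα
    obtain ⟨β, hβ, rfl⟩ := hb
    have hab' : (α : EReal) < (β : EReal) := hab
    have hαβ : α < β := by exact_mod_cast hab' 
    exact hβ.mono fun x (hx : f x < α) => show x ∈ {x ∈ univ | f x < β} from ⟨trivial, lt_trans hx hαβ⟩
  -- m ≠ ⊤
  have hmtop : m ≠ ⊤ := by
    intro htop
    have huniv : IsMeagre (univ : Set X) := by
      have he : (univ : Set X) = ⋃ n : ℕ, {x | f x < n} := by
        ext x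
        simp only [mem_univ, mem_iUnion, mem_setOf_eq, true_iff]
        exact exists_nat_gt (f x)
      rw [he]
      exact isMeagre_iUnion fun n => hmeag n (by rw [htop]; exact EReal.coe_lt_top n)
    have hd : Dense ((univ : Set X)ᶜ) := dense_of_mem_residual huniv
    rw [compl_univ] at hd
    exact absurd hd.nonempty (not_nonempty_empty)
  -- frontiers of sublevel sets above m are nowhere dense
  have hfr : ∀ α : ℝ, m < (α : EReal) → IsNowhereDense (frontier {x | f x < α}) := by
    intro α hα
    obtain ⟨x0, hx0⟩ := h1 α hα
    rw [IsClosed.isNowhereDense_iff isClosed_frontier, ← subset_empty_iff]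
    intro y hy
    have hy1 : y ∈ interior (closure {x | f x < α}) :=
      interior_mono frontier_subset_closure hy
    have hy2 : y ∈ interior {x | f x < α} := aux_int_cl (hf α) hx0 hy1
    have hy3 : y ∈ frontier {x | f x < α} := interior_subset hy
    exact hy3.2 hy2
  -- the bad set
  set Fr : ℚ → Set X := fun q =>
    if m < ((q : ℝ) : EReal) then frontier {x | f x < (q : ℝ)} else ∅ with hFr
  set D : Set X := {x | (f x : EReal) ≤ m} ∪ ⋃ q : ℚ, Fr q with hDdef
  -- {f ≤ m} is meagre
  have hle : IsMeagre {x | (f x : EReal) ≤ m} := by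
    rcases h2 with hb | ⟨hb, hmm⟩
    · have : {x | (f x : EReal) ≤ m} = ∅ := by
        ext x
        simp only [mem_setOf_eq, mem_empty_iff_false, iff_false, hb, le_bot_iff]
        exact EReal.coe_ne_bot _
      rw [this]; exact IsMeagre.empty
    · set r := m.toReal with hrdef
      have hr : ((r : ℝ) : EReal) = m := EReal.coe_toReal hmtop hb.ne'
      have hlt : IsMeagre {x | f x < r} := by
        have he : {x | f x < r} = ⋃ q : ℚ,
            (if (q : ℝ) < r then {x | f x < (q : ℝ)} else ∅) := by
          ext x
          simp only [mem_setOf_eq, mem_iUnion]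
          constructor
          · intro hx
            obtain ⟨q, hq1, hq2⟩ := exists_rat_btwn hx
            exact ⟨q, by rw [if_pos hq2]; exact hq1⟩
          · rintro ⟨q, hq⟩
            by_cases hc : (q : ℝ) < r
            · rw [if_pos hc] at hq; exact lt_trans hq hc
            · rw [if_neg hc] at hq; exact absurd hq (notMem_empty x)
        rw [he]
        apply hcount
        intro q
        by_cases hc : (q : ℝ) < r
        · rw [if_pos hc]
          exact hmeag _ (by rw [← hr]; exact_mod_cast hc)
        · rw [if_neg hc]; exact IsMeagre.empty
      have he2 : {x | (f x : EReal) ≤ m} ⊆ {x | f x < r} ∪ {x | (f x : EReal) = m} := by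
        intro x hx
        have hx' : (f x : EReal) ≤ m := hx
        rcases lt_or_eq_of_le hx' with h | h
        · left
          rw [← hr, EReal.coe_lt_coe_iff] at h
          exact h
        · right; exact h
      exact (hunion _ _ hlt hmm).mono he2
  -- D is meagre
  have hDmeag : IsMeagre D := by
    apply hunion _ _ hle
    apply hcount
    intro q
    rw [hFr]
    by_cases hc : m < ((q : ℝ) : EReal)
    · simp only [if_pos hc]
      exact hnwdm _ (hfr _ hc)
    · simp only [if_neg hc]
      exact IsMeagre.empty
  -- basic facts about points outside D
  have hDgt : ∀ x, x ∉ D → m < (f x : EReal) := by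
    intro x hx
    have : x ∉ {x | (f x : EReal) ≤ m} := fun h => hx (Or.inl h)
    exact lt_of_not_ge this
  have hDfr : ∀ x, x ∉ D → ∀ q : ℚ, m < ((q : ℝ) : EReal) →
      x ∉ frontier {y | f y < (q : ℝ)} := by
    intro x hx q hq hmem
    apply hx
    right
    refine mem_iUnion.2 ⟨q, ?_⟩
    rw [hFr]
    simpa only [if_pos hq] using hmem
  -- continuity off D
  have hcont : ∀ x, x ∉ D → ContinuousAt f x := by
    intro x hx
    have hfx : m < ((f x : ℝ) : EReal) := hDgt x hx
    rw [ContinuousAt]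
    refine tendsto_order.2 ⟨?_, ?_⟩
    · intro a ha
      obtain ⟨q, hmq, haq, hqf⟩ : ∃ q : ℚ, m < ((q : ℝ) : EReal) ∧ a < q ∧ (q : ℝ) < f x := by
        rcases eq_or_ne m ⊥ with hb | hb
        · obtain ⟨q, hq1, hq2⟩ := exists_rat_btwn ha
          exact ⟨q, by rw [hb]; exact bot_lt_iff_ne_bot.2 (EReal.coe_ne_bot _), hq1, hq2⟩
        · set r := m.toReal
          have hr : ((r : ℝ) : EReal) = m := EReal.coe_toReal hmtop hb
          have hrf : r < f x := by
            rw [← hr] at hfx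
            exact_mod_cast hfx
          obtain ⟨q, hq1, hq2⟩ := exists_rat_btwn (max_lt ha hrf)
          refine ⟨q, ?_, lt_of_le_of_lt (le_max_left a r) hq1, hq2⟩
          rw [← hr]
          exact_mod_cast lt_of_le_of_lt (le_max_right a r) hq1
      have hxnc : x ∉ closure {y | f y < (q : ℝ)} := by
        intro hc
        apply hDfr x hx q hmq
        refine ⟨hc, fun hi => ?_⟩
        have hfi : x ∈ {y | f y < (q : ℝ)} := interior_subset hi
        exact absurd hfi (not_lt.2 hqf.le)
      filter_upwards [isClosed_closure.isOpen_compl.mem_nhds hxnc] with y hy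
      have hyq : ¬ f y < (q : ℝ) := fun h => hy (subset_closure h)
      exact lt_of_lt_of_le haq (not_lt.1 hyq)
    · intro b hb
      obtain ⟨q, hq1, hq2⟩ := exists_rat_btwn hb
      have hmq : m < ((q : ℝ) : EReal) := lt_trans hfx (by exact_mod_cast hq1)
      have hxi : x ∈ interior {y | f y < (q : ℝ)} := by
        by_contra hni
        apply hDfr x hx q hmq
        exact ⟨subset_closure (show x ∈ {y | f y < (q : ℝ)} from hq1), hni⟩
      filter_upwards [isOpen_interior.mem_nhds hxi] with y hy
      have hyq : y ∈ {y | f y < (q : ℝ)} := interior_subset hy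
      exact lt_trans hyq hq2
  constructor
  · exact hDmeag.mono fun x hx => by
      by_contra hxD
      exact hx (hcont x hxD)
  -- nowhere density
  have hnd : IsNowhereDense {x | (f x : EReal) ≤ m} := by
    rcases eq_or_ne m ⊥ with hb | hb
    · have : {x | (f x : EReal) ≤ m} = ∅ := by
        ext x
        simp only [mem_setOf_eq, mem_empty_iff_false, iff_false, hb, le_bot_iff]
        exact EReal.coe_ne_bot _
      rw [this]; exact isNowhereDense_empty
    · rw [IsNowhereDense]
      by_contra hcon
      obtain ⟨y, hy⟩ := nonempty_iff_ne_empty.2 hcon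
      have hdense : Dense Dᶜ := dense_of_mem_residual hDmeag
      obtain ⟨z, hz1, hz2⟩ := hdense.inter_open_nonempty _ isOpen_interior ⟨y, hy⟩
      set r := m.toReal
      have hr : ((r : ℝ) : EReal) = m := EReal.coe_toReal hmtop hb
      have hrz : r < f z := by
        have := hDgt z hz2
        rw [← hr] at this
        exact_mod_cast this
      obtain ⟨q, hq1, hq2⟩ := exists_rat_btwn hrz
      have hmq : m < ((q : ℝ) : EReal) := by rw [← hr]; exact_mod_cast hq1
      have hznc : z ∉ closure {y | f y < (q : ℝ)} := by
        intro hc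
        apply hDfr z hz2 q hmq
        refine ⟨hc, fun hi => ?_⟩
        have hfi : z ∈ {y | f y < (q : ℝ)} := interior_subset hi
        exact absurd hfi (not_lt.2 hq2.le)
      apply hznc
      apply closure_mono (show {x | (f x : EReal) ≤ m} ⊆ {y | f y < (q : ℝ)} from ?_)
      · exact interior_subset hz1
      · intro x hx
        have : (f x : EReal) < ((q : ℝ) : EReal) := lt_of_le_of_lt hx hmq
        exact_mod_cast this
  have hsub : ∀ t : Set X, t ⊆ {x | (f x : EReal) ≤ m} → IsNowhereDense t := by
    intro t ht
    rw [IsNowhereDense] at hnd ⊢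
    have h := interior_mono (closure_mono ht)
    rw [hnd] at h
    exact eq_empty_of_subset_empty h
  refine ⟨hsub _ fun x hx => ?_, hsub _ fun x hx => ?_⟩
  · show (f x : EReal) ≤ m
    exact le_of_lt hx
  · show (f x : EReal) ≤ m
    exact le_of_eq hx
end

section
/- Let X be a Baire topological vector space, U ⊆ X an open convex set, and A₁, A₂ ⊆ X meagre sets with A₂ ∩ U = ∅. If the set G := (U \ A₁) ∪ A₂ is convex, then A₁ ∩ U = ∅ and the interior of G equals U. -/
open Set Topology

/-- Key lemma: in a Baire TVS, for any open `W`, meagre `S`, and `x ∈ W`,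
there is `y` with both `y` and `2x - y` in `W \ S`. -/
lemma exists_reflection_pair {X : Type*} [AddCommGroup X] [Module ℝ X] [TopologicalSpace X]
    [IsTopologicalAddGroup X] [BaireSpace X] {W S : Set X} (hW : IsOpen W) (hS : IsMeagre S)
    {x : X} (hx : x ∈ W) :
    ∃ y, y ∈ W \ S ∧ (x + x) - y ∈ W \ S := by
  set f : X ≃ₜ X := (Homeomorph.neg X).trans (Homeomorph.addLeft (x + x)) with hf
  have hfy : ∀ y, f y = (x + x) - y := by intro y; simp [hf, sub_eq_add_neg]
  have hSf : IsMeagre (S ∪ f ⁻¹' S) := by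
    rw [IsMeagre, compl_union]
    exact Filter.inter_mem hS (hS.preimage_of_isOpenMap f.continuous f.isOpenMap)
  have hV : IsOpen (W ∩ f ⁻¹' W) := hW.inter (hW.preimage f.continuous)
  have hxV : x ∈ W ∩ f ⁻¹' W := by
    refine ⟨hx, ?_⟩
    simp only [mem_preimage, hfy]
    convert hx using 1
    abel
  have hd : Dense (S ∪ f ⁻¹' S)ᶜ := dense_of_mem_residual hSf
  obtain ⟨y, hyS, hyV⟩ := hd.exists_mem_open hV ⟨x, hxV⟩
  rw [mem_compl_iff, mem_union, not_or] at hyS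
  exact ⟨y, ⟨hyV.1, hyS.1⟩, by
    rw [← hfy]; exact ⟨hyV.2, fun h => hyS.2 h⟩⟩

theorem stmt18 {X : Type*} [AddCommGroup X] [Module ℝ X] [TopologicalSpace X]
    [IsTopologicalAddGroup X] [ContinuousSMul ℝ X] [BaireSpace X]
    (U A₁ A₂ : Set X) (hU : IsOpen U) (hUc : Convex ℝ U)
    (hA₁ : IsMeagre A₁) (hA₂ : IsMeagre A₂) (hdisj : A₂ ∩ U = ∅)
    (hG : Convex ℝ ((U \ A₁) ∪ A₂)) :
    A₁ ∩ U = ∅ ∧ interior ((U \ A₁) ∪ A₂) = U := by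
  set G := (U \ A₁) ∪ A₂ with hGdef
  have hmid : ∀ (y x : X), (1/2 : ℝ) • y + (1/2 : ℝ) • ((x + x) - y) = x := by
    intro y x
    rw [← smul_add]
    have : y + ((x + x) - y) = x + x := by abel
    rw [this, smul_add, ← add_smul]
    norm_num
  have h1 : A₁ ∩ U = ∅ := by
    by_contra h
    obtain ⟨x, hxA, hxU⟩ := nonempty_iff_ne_empty.mpr h
    obtain ⟨y, hy, hz⟩ := exists_reflection_pair hU hA₁ hxU
    have hxG : x ∈ G := by
      have := hG (Or.inl hy) (Or.inl hz) (by norm_num : (0:ℝ) ≤ 1/2)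
        (by norm_num : (0:ℝ) ≤ 1/2) (by norm_num)
      rwa [hmid] at this
    rcases hxG with h' | h'
    · exact h'.2 hxA
    · have : x ∈ A₂ ∩ U := ⟨h', hxU⟩
      rw [hdisj] at this
      exact this
  refine ⟨h1, ?_⟩
  apply subset_antisymm
  · intro x hx
    have hxG : interior G ⊆ G := interior_subset
    obtain ⟨y, hy, hz⟩ := exists_reflection_pair isOpen_interior hA₂ hx
    have hGU : ∀ z, z ∈ G → z ∉ A₂ → z ∈ U := by
      rintro z (hz' | hz') hzA
      · exact hz'.1
      · exact absurd hz' hzA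
    have hyU : y ∈ U := hGU y (hxG hy.1) hy.2
    have hzU : (x + x) - y ∈ U := hGU _ (hxG hz.1) hz.2
    have := hUc hyU hzU (by norm_num : (0:ℝ) ≤ 1/2) (by norm_num : (0:ℝ) ≤ 1/2) (by norm_num)
    rwa [hmid] at this
  · refine subset_interior_iff.mpr ⟨U, hU, subset_rfl, ?_⟩
    intro x hx
    left
    refine ⟨hx, fun hA => ?_⟩
    have : x ∈ A₁ ∩ U := ⟨hA, hx⟩
    rw [h1] at this
    exact this
end

section
/- Let X be a topological vector space and f : X → ℝ a quasiconvex upper semicontinuous function. Then f is quasicontinuous in the sense of Kempisty: for every open set Ω ⊆ ℝ, the interior of f⁻¹(Ω) is dense in f⁻¹(Ω). -/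
open Set Topology

theorem stmt19 {X : Type*} [AddCommGroup X] [Module ℝ X] [TopologicalSpace X]
    [IsTopologicalAddGroup X] [ContinuousSMul ℝ X]
    (f : X → ℝ)
    (hf : ∀ x y : X, ∀ t : ℝ, t ∈ Set.Icc (0:ℝ) 1 →
      f (t • x + (1 - t) • y) ≤ max (f x) (f y))
    (husc : ∀ α : ℝ, IsOpen {x | f x < α}) :
    ∀ Ω : Set ℝ, IsOpen Ω → f ⁻¹' Ω ⊆ closure (interior (f ⁻¹' Ω)) := by
  intro Ω hΩ x hx
  rw [mem_closure_iff]
  intro V hVopen hxV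
  obtain ⟨ε, hε, hball⟩ := Metric.isOpen_iff.mp hΩ (f x) hx
  set α : ℝ := f x - ε / 2 with hαdef
  set U : Set X := {y | f y < α} with hUdef
  have hUopen : IsOpen U := husc α
  have hUconv : Convex ℝ U := by
    intro y hy z hz s t hs ht hst
    have h := hf y z s ⟨hs, by linarith⟩
    have hts : (1 : ℝ) - s = t := by linarith
    rw [hts] at h
    exact lt_of_le_of_lt h (max_lt hy hz)
  set O : Set X := V ∩ {y | f y < f x + ε} with hOdef
  have hOopen : IsOpen O := hVopen.inter (husc _)
  have hxO : x ∈ O := ⟨hxV, by simp only [mem_setOf_eq]; linarith⟩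
  by_cases hS : (O \ closure U).Nonempty
  · obtain ⟨y, hyO, hyC⟩ := hS
    have hopen : IsOpen (O \ closure U) := hOopen.sdiff isClosed_closure
    have hsub : O \ closure U ⊆ f ⁻¹' Ω := by
      rintro z ⟨⟨_, hzb⟩, hz⟩
      have h1 : α ≤ f z := not_lt.mp fun h => hz (subset_closure h)
      have hzb' : f z < f x + ε := hzb
      apply hball
      rw [Metric.mem_ball, Real.dist_eq, abs_lt]
      constructor <;> simp only [hαdef] at h1 ⊢ <;> linarith
    exact ⟨y, hyO.1, interior_maximal hsub hopen ⟨hyO, hyC⟩⟩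
  · exfalso
    rw [not_nonempty_iff_eq_empty, diff_eq_empty] at hS
    have hUne : ∃ y, y ∈ U := by
      by_contra h
      push_neg at h
      rw [eq_empty_iff_forall_notMem.mpr h, closure_empty] at hS
      exact hS hxO
    obtain ⟨y, hyU⟩ := hUne
    have hxint : x ∈ interior (closure U) := mem_interior.mpr ⟨O, hS, hOopen, hxO⟩
    have hcont : Continuous fun t : ℝ => x + t • (x - y) := by continuity
    have hev : ∀ᶠ t : ℝ in nhds 0, x + t • (x - y) ∈ interior (closure U) := by
      have h0 : x + (0 : ℝ) • (x - y) ∈ interior (closure U) := by simpa using hxint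
      exact hcont.continuousAt.eventually_mem (isOpen_interior.mem_nhds h0)
    obtain ⟨δ, hδ, hδ'⟩ := Metric.eventually_nhds_iff.mp hev
    set t : ℝ := δ / 2 with htdef
    have ht : 0 < t := by positivity
    have hp : x + t • (x - y) ∈ interior (closure U) := by
      apply hδ'
      rw [Real.dist_eq, sub_zero, abs_of_pos ht]
      linarith
    have hp' : x + t • (x - y) ∈ closure U := interior_subset hp
    have hyint : y ∈ interior U := by rwa [hUopen.interior_eq]
    have h1t : (1 : ℝ) + t ≠ 0 := by positivity
    have key := hUconv.combo_closure_interior_mem_interior hp' hyint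
      (a := 1 / (1 + t)) (b := t / (1 + t)) (by positivity) (by positivity)
      (by field_simp)
    have heq : (1 / (1 + t)) • (x + t • (x - y)) + (t / (1 + t)) • y = x := by
      match_scalars <;> field_simp <;> ring
    rw [heq, hUopen.interior_eq] at key
    have : f x < α := key
    simp only [hαdef] at this
    linarith
end
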